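/- Let τ < τ', ν ≥ 1, and let x, y : [τ,τ'] → ℝ be Lipschitz functions with x(t) ≤ y(t) for all t, satisfying |y(τ') - x(τ')| ≤ |y(τ) - x(τ)| + C₁(τ' - τ)·2^{-ν} for some constant C₁ > 0. Suppose in addition that x(τ') - x(τ) ≥ λ_min (τ' - τ) for some λ_min > 0, and that (with ρ' := λ_min/(6C₁)) the discrete Oleinik condition 2^{-ν}/(y(τ') - x(τ')) ≤ 5ρ'/(x(τ') - a) holds together with x(τ') - a ≥ λ_min(τ'-τ) (fronts travel at speed at least λ_min). Then y(τ) - x(τ) ≥ (1 - 5C₁ρ'/λ_min)·(y(τ') - x(τ')) > 0, i.e. x(τ) < y(τ) whenever y(τ') > x(τ'). -/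

import Mathlib

/-!
The Oleinik estimate at time `τ'` bounds `2^{-ν}` by `5ρ' (y τ' - x τ') / (x τ' - a)`, and since
`x τ' - a ≥ λ_min (τ' - τ)` the total growth `C₁ (τ' - τ) 2^{-ν}` allowed by Lemma 3.1 is at most
`(5 C₁ ρ' / λ_min) (y τ' - x τ') = (5/6) (y τ' - x τ')`. So at most five sixths of the final gap
can have been created after time `τ`, and the remaining sixth was already there.
-/

open Filter Topology Set

section GapBound

variable {d d' ε C T lam k E : ℝ}

lemma growth_le_of_oleinik (hC : 0 ≤ C) (hlam : 0 < lam) (hε : 0 ≤ ε) (hd' : 0 < d')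
    (hE : 0 < E) (holeinik : ε / d' ≤ k / E) (hdist : lam * T ≤ E) :
    C * T * ε ≤ C * k / lam * d' := by
  have hεE : ε * E ≤ k * d' := (div_le_div_iff₀ hd' hE).mp holeinik
  have hεT : lam * (T * ε) ≤ k * d' :=
    calc lam * (T * ε) = lam * T * ε := by ring
      _ ≤ E * ε := mul_le_mul_of_nonneg_right hdist hε
      _ = ε * E := mul_comm E ε
      _ ≤ k * d' := hεE
  have hTε : T * ε ≤ k * d' / lam := (le_div_iff₀' hlam).mpr hεT
  calc C * T * ε = C * (T * ε) := mul_assoc C T ε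
    _ ≤ C * (k * d' / lam) := mul_le_mul_of_nonneg_left hTε hC
    _ = C * k / lam * d' := by ring

lemma gap_ge_of_oleinik (hC : 0 ≤ C) (hlam : 0 < lam) (hε : 0 ≤ ε) (hd' : 0 < d')
    (hE : 0 < E) (hgrow : d' ≤ d + C * T * ε) (holeinik : ε / d' ≤ k / E)
    (hdist : lam * T ≤ E) :
    (1 - C * k / lam) * d' ≤ d := by
  have := growth_le_of_oleinik hC hlam hε hd' hE holeinik hdist
  linarith

end GapBound

theorem stmt_7_general (a τ τ' C₁ lammin : ℝ) (ν : ℕ) (x y : ℝ → ℝ)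
    (hττ : τ < τ') (hC₁ : 0 < C₁) (hlam : 0 < lammin)
    (hord : ∀ t ∈ Set.Icc τ τ', x t ≤ y t)
    (hgrow : |y τ' - x τ'| ≤ |y τ - x τ| + C₁ * (τ' - τ) * (2 : ℝ) ^ (-(ν : ℤ)))
    (hpos : x τ' < y τ')
    (holeinik : (2 : ℝ) ^ (-(ν : ℤ)) / (y τ' - x τ') ≤
      5 * (lammin / (6 * C₁)) / (x τ' - a))
    (hdist : lammin * (τ' - τ) ≤ x τ' - a) :
    y τ - x τ ≥ (1 - 5 * C₁ * (lammin / (6 * C₁)) / lammin) * (y τ' - x τ') ∧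
      x τ < y τ := by
  have hd' : 0 < y τ' - x τ' := sub_pos.mpr hpos
  have hd : 0 ≤ y τ - x τ := sub_nonneg.mpr (hord τ ⟨le_rfl, hττ.le⟩)
  have hE : 0 < x τ' - a := (mul_pos hlam (sub_pos.mpr hττ)).trans_le hdist
  rw [abs_of_pos hd', abs_of_nonneg hd] at hgrow
  have hgap := gap_ge_of_oleinik hC₁.le hlam (by positivity) hd' hE hgrow holeinik hdist
  have hcoef : C₁ * (5 * (lammin / (6 * C₁))) / lammin = 5 / 6 := by
    field_simp
  have hcoef' : 5 * C₁ * (lammin / (6 * C₁)) / lammin = 5 / 6 := by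
    rw [← hcoef]; ring
  rw [hcoef] at hgap
  rw [hcoef']
  constructor <;> linarith

theorem stmt_7 (a τ τ' C₁ lammin : ℝ) (ν : ℕ) (x y : ℝ → ℝ)
    (hττ : τ < τ') (hC₁ : 0 < C₁) (hlam : 0 < lammin) (hν : 1 ≤ ν)
    (hlipx : ∃ L : NNReal, LipschitzOnWith L x (Set.Icc τ τ'))
    (hlipy : ∃ L : NNReal, LipschitzOnWith L y (Set.Icc τ τ'))
    (hord : ∀ t ∈ Set.Icc τ τ', x t ≤ y t)
    (hgrow : |y τ' - x τ'| ≤ |y τ - x τ| + C₁ * (τ' - τ) * (2 : ℝ) ^ (-(ν : ℤ)))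
    (hspeed : lammin * (τ' - τ) ≤ x τ' - x τ)
    (hpos : x τ' < y τ')
    (holeinik : (2 : ℝ) ^ (-(ν : ℤ)) / (y τ' - x τ') ≤
      5 * (lammin / (6 * C₁)) / (x τ' - a))
    (hdist : lammin * (τ' - τ) ≤ x τ' - a) :
    y τ - x τ ≥ (1 - 5 * C₁ * (lammin / (6 * C₁)) / lammin) * (y τ' - x τ') ∧
      x τ < y τ :=
  stmt_7_general a τ τ' C₁ lammin ν x y hττ hC₁ hlam hord hgrow hpos holeinik hdist
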